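/- Let n ≥ 1 be an integer, N, q ≥ 1 integers, k ≥ 2, and define K₁ = (3(n+1)/2)·(log(Nq(k-1)) + 1/7) and K₂ = (3n/2) + 12. Suppose g(t) = K₁ + K₂·log(n + t + 9/2) for t ≥ 0. Then for any U > 0 and C₀, C₂ > 0, ∫₀^{U/3} g(3t)·C₀ dt + ∫_{U/3}^∞ g(3t)·C₂/(3t)² dt is finite, and with the choice U = √(C₂/C₀), the total is at most (2/3)·√(C₀C₂)·(K₁ + K₂·(log(n + 9/2 + √(C₂/C₀)) + 1/2)). -/

import Mathlib

/-!
With `a = n + 9/2`, `g s = K₁ + K₂ log (a + s)` is increasing, so the integral over `[0, U/3]`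
is at most `(U/3) C₀ g(U)`. On the tail, `log (a + s) ≤ log (a + U) + log (s / U)` for
`s ≥ U`, and `∫_U^∞ (c₁ + c₂ log (s/U)) / s² ds = (c₁ + c₂) / U` exactly, an antiderivative
being `-(c₁ + c₂ (log (s/U) + 1)) / s`; so after the substitution `s = 3t` the tail is at most
`C₂ (g(U) + K₂) / (3U)`. The choice `U = √(C₂/C₀)` makes `U C₀ = C₂ / U = √(C₀ C₂)`.
-/

open Real MeasureTheory intervalIntegral

open Set Filter Topology

section TailIntegral

variable {a b : ℝ}

lemma hasDerivAt_antideriv_log_div_div_sq (c₁ c₂ : ℝ) (hb : b ≠ 0) {t : ℝ} (ht : t ≠ 0) :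
    HasDerivAt (fun t => -(c₁ + c₂ * (log (t / b) + 1)) / t)
      ((c₁ + c₂ * log (t / b)) / t ^ 2) t := by
  have hlog : HasDerivAt (fun t => log (t / b)) t⁻¹ t := by
    convert ((hasDerivAt_id' t).div_const b).log (div_ne_zero ht hb) using 1
    field_simp
  refine ((((hlog.add_const 1).const_mul c₂).const_add c₁).fun_neg.fun_div (hasDerivAt_id' t)
    ht).congr_deriv ?_
  field_simp
  ring

lemma tendsto_antideriv_log_div_div_sq (c₁ c₂ : ℝ) (hb : b ≠ 0) :
    Tendsto (fun t => -(c₁ + c₂ * (log (t / b) + 1)) / t) atTop (𝓝 0) := by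
  have h := (isLittleO_log_id_atTop.tendsto_div_nhds_zero.const_mul (-c₂)).add
    (tendsto_inv_atTop_zero.const_mul (c₂ * log b - c₁ - c₂))
  rw [mul_zero, mul_zero, add_zero] at h
  refine h.congr' ?_
  filter_upwards [eventually_gt_atTop 0] with t ht
  rw [id_eq, log_div ht.ne' hb]
  field_simp
  ring

lemma integrableOn_Ioi_add_mul_log_div_div_sq (c₁ c₂ : ℝ) (hb : 0 < b) :
    IntegrableOn (fun t => (c₁ + c₂ * log (t / b)) / t ^ 2) (Ioi b) := by
  have of_nonneg (c₁ c₂ : ℝ) (h₁ : 0 ≤ c₁) (h₂ : 0 ≤ c₂) :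
      IntegrableOn (fun t => (c₁ + c₂ * log (t / b)) / t ^ 2) (Ioi b) := by
    refine integrableOn_Ioi_deriv_of_nonneg'
      (fun t ht => hasDerivAt_antideriv_log_div_div_sq c₁ c₂ hb.ne' (hb.trans_le ht).ne')
      (fun t ht => ?_) (tendsto_antideriv_log_div_div_sq c₁ c₂ hb.ne')
    have := log_nonneg ((one_le_div hb).2 (le_of_lt ht))
    positivity
  refine IntegrableOn.congr_fun (((of_nonneg 1 0 zero_le_one le_rfl).const_mul c₁).add
    ((of_nonneg 0 1 le_rfl zero_le_one).const_mul c₂)) (fun t _ => ?_) measurableSet_Ioi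
  simp only [Pi.add_apply]
  ring

lemma integral_Ioi_add_mul_log_div_div_sq (c₁ c₂ : ℝ) (hb : 0 < b) :
    ∫ t in Ioi b, (c₁ + c₂ * log (t / b)) / t ^ 2 = (c₁ + c₂) / b := by
  rw [integral_Ioi_of_hasDerivAt_of_tendsto'
    (fun t ht => hasDerivAt_antideriv_log_div_div_sq c₁ c₂ hb.ne' (hb.trans_le ht).ne')
    (integrableOn_Ioi_add_mul_log_div_div_sq c₁ c₂ hb)
    (tendsto_antideriv_log_div_div_sq c₁ c₂ hb.ne')]
  simp [hb.ne']
  ring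

lemma log_add_le_log_add_add_log_div (ha : 0 ≤ a) (hb : 0 < b) {s : ℝ} (hbs : b ≤ s) :
    log (a + s) ≤ log (a + b) + log (s / b) := by
  have hs : 0 < s := hb.trans_le hbs
  rw [← log_mul (by positivity) (by positivity)]
  refine log_le_log (by positivity) ?_
  rw [add_mul, mul_div_cancel₀ _ hb.ne', mul_div_assoc']
  have : a ≤ a * s / b := by rw [le_div_iff₀ hb]; gcongr
  linarith

variable {K₂ : ℝ}

lemma integrableOn_Ioi_add_mul_log_add_div_sq (K₁ : ℝ) (ha : 1 ≤ a) (hK₂ : 0 ≤ K₂)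
    (hb : 0 < b) :
    IntegrableOn (fun s => (K₁ + K₂ * log (a + s)) / s ^ 2) (Ioi b) := by
  refine (integrableOn_Ioi_add_mul_log_div_div_sq (|K₁| + K₂ * log (a + b)) K₂ hb).mono'
    (by fun_prop : Measurable _).aestronglyMeasurable ?_
  filter_upwards [ae_restrict_mem measurableSet_Ioi] with s (hs : b < s)
  have hlog : 0 ≤ log (a + s) := log_nonneg (by linarith)
  rw [norm_div, norm_pow, Real.norm_eq_abs, Real.norm_eq_abs, sq_abs]
  gcongr
  calc |K₁ + K₂ * log (a + s)| ≤ |K₁| + K₂ * log (a + s) := by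
        exact (abs_add_le _ _).trans_eq (by rw [abs_of_nonneg (mul_nonneg hK₂ hlog)])
    _ ≤ |K₁| + K₂ * log (a + b) + K₂ * log (s / b) := by
        rw [add_assoc, ← mul_add]
        gcongr
        exact log_add_le_log_add_add_log_div (by linarith) hb hs.le

lemma setIntegral_Ioi_add_mul_log_add_div_sq_le (K₁ : ℝ) (ha : 1 ≤ a) (hK₂ : 0 ≤ K₂)
    (hb : 0 < b) :
    ∫ s in Ioi b, (K₁ + K₂ * log (a + s)) / s ^ 2 ≤ (K₁ + K₂ * (log (a + b) + 1)) / b :=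
  calc ∫ s in Ioi b, (K₁ + K₂ * log (a + s)) / s ^ 2
      ≤ ∫ s in Ioi b, (K₁ + K₂ * log (a + b) + K₂ * log (s / b)) / s ^ 2 := by
        refine setIntegral_mono_on (integrableOn_Ioi_add_mul_log_add_div_sq K₁ ha hK₂ hb)
          (integrableOn_Ioi_add_mul_log_div_div_sq _ _ hb) measurableSet_Ioi fun s hs => ?_
        rw [add_assoc, ← mul_add]
        gcongr
        exact log_add_le_log_add_add_log_div (by linarith) hb (le_of_lt hs)
    _ = (K₁ + K₂ * (log (a + b) + 1)) / b := by
        rw [integral_Ioi_add_mul_log_div_div_sq _ _ hb]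
        ring

end TailIntegral

lemma intervalIntegral_le_sub_mul_of_monotoneOn {f : ℝ → ℝ} {a b : ℝ} (hab : a ≤ b)
    (hf : MonotoneOn f (Icc a b)) :
    ∫ x in a..b, f x ≤ (b - a) * f b :=
  calc ∫ x in a..b, f x ≤ ∫ _ in a..b, f b :=
        integral_mono_on hab (MonotoneOn.intervalIntegrable (by rwa [uIcc_of_le hab]))
          intervalIntegrable_const fun x hx => hf hx (right_mem_Icc.2 hab) hx.2
    _ = (b - a) * f b := by simp

lemma intervalIntegral_comp_mul_le_of_monotoneOn {f : ℝ → ℝ} {c U : ℝ} (hc : 0 < c)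
    (hU : 0 ≤ U) (hf : MonotoneOn f (Icc 0 U)) :
    ∫ t in (0:ℝ)..(U / c), f (c * t) ≤ c⁻¹ * (U * f U) := by
  rw [intervalIntegral.integral_comp_mul_left f hc.ne', mul_zero, mul_div_cancel₀ U hc.ne',
    smul_eq_mul]
  gcongr
  exact (intervalIntegral_le_sub_mul_of_monotoneOn hU hf).trans_eq (by rw [sub_zero])

theorem stmt_16_general (n : ℕ)
    (K₁ K₂ : ℝ)
    (hK₂ : K₂ = 3 * (n : ℝ) / 2 + 12)
    (g : ℝ → ℝ) (hg : ∀ t, g t = K₁ + K₂ * Real.log ((n : ℝ) + t + 9/2))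
    (U C₀ C₂ : ℝ) (hU : 0 < U) (hC₀ : 0 < C₀) (hC₂ : 0 < C₂) :
    IntegrableOn (fun t => g (3 * t) * C₂ / (3 * t) ^ 2) (Set.Ioi (U / 3)) ∧
    (U = Real.sqrt (C₂ / C₀) →
      (∫ t in (0:ℝ)..(U/3), g (3 * t) * C₀) +
        (∫ t in Set.Ioi (U/3), g (3 * t) * C₂ / (3 * t) ^ 2) ≤
      (2/3) * Real.sqrt (C₀ * C₂) *
        (K₁ + K₂ * (Real.log ((n : ℝ) + 9/2 + Real.sqrt (C₂ / C₀)) + 1/2))) := by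
  obtain ⟨a, ha_def⟩ : ∃ a : ℝ, a = n + 9 / 2 := ⟨_, rfl⟩
  have ha : 1 ≤ a := by linarith [n.cast_nonneg (α := ℝ)]
  have hK₂_nonneg : 0 ≤ K₂ := by rw [hK₂]; positivity
  have hg' (s : ℝ) : g s = K₁ + K₂ * log (a + s) := by rw [hg, ha_def]; ring_nf
  have h3U : 3 * (U / 3) = U := mul_div_cancel₀ U three_ne_zero
  have tail_integrand : (fun t => g (3 * t) * C₂ / (3 * t) ^ 2) =
      fun t => C₂ * ((K₁ + K₂ * log (a + 3 * t)) / (3 * t) ^ 2) := by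
    ext t; rw [hg']; ring
  have tail_eq : ∫ t in Ioi (U / 3), g (3 * t) * C₂ / (3 * t) ^ 2 =
      C₂ / 3 * ∫ s in Ioi U, (K₁ + K₂ * log (a + s)) / s ^ 2 := by
    rw [tail_integrand,
      integral_comp_mul_left_Ioi (fun s => C₂ * ((K₁ + K₂ * log (a + s)) / s ^ 2)) _ three_pos,
      h3U, MeasureTheory.integral_const_mul, smul_eq_mul]
    ring
  refine ⟨?_, fun hUeq => ?_⟩
  · rw [tail_integrand, integrableOn_Ioi_comp_mul_left_iff
      (fun s => C₂ * ((K₁ + K₂ * log (a + s)) / s ^ 2)) _ three_pos, h3U]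
    exact (integrableOn_Ioi_add_mul_log_add_div_sq K₁ ha hK₂_nonneg hU).const_mul C₂
  have hC₂U : C₂ = U ^ 2 * C₀ := by
    rw [hUeq, sq_sqrt (by positivity)]
    field_simp
  have hS : √(C₀ * C₂) = U * C₀ := by
    rw [hC₂U, show C₀ * (U ^ 2 * C₀) = (U * C₀) ^ 2 by ring, sqrt_sq (by positivity)]
  have head_le : ∫ t in (0:ℝ)..(U / 3), g (3 * t) * C₀ ≤ 3⁻¹ * (U * (g U * C₀)) :=
    intervalIntegral_comp_mul_le_of_monotoneOn (f := fun s => g s * C₀) three_pos hU.le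
      fun x hx y _ hxy => by simp only [hg']; gcongr; linarith [hx.1]
  rw [← hUeq, ← ha_def, hS, tail_eq]
  calc _ ≤ 3⁻¹ * (U * (g U * C₀)) + C₂ / 3 * ((K₁ + K₂ * (log (a + U) + 1)) / U) := by
        gcongr
        exact setIntegral_Ioi_add_mul_log_add_div_sq_le K₁ ha hK₂_nonneg hU
    _ = _ := by
        rw [hg', hC₂U]
        field_simp
        ring

theorem stmt_16 (n : ℕ) (hn : 1 ≤ n) (N q : ℕ) (hN : 1 ≤ N) (hq : 1 ≤ q)
    (k : ℕ) (hk : 2 ≤ k)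
    (K₁ K₂ : ℝ)
    (hK₁ : K₁ = (3 * ((n : ℝ) + 1) / 2) * (Real.log ((N : ℝ) * q * ((k : ℝ) - 1)) + 1/7))
    (hK₂ : K₂ = 3 * (n : ℝ) / 2 + 12)
    (g : ℝ → ℝ) (hg : ∀ t, g t = K₁ + K₂ * Real.log ((n : ℝ) + t + 9/2))
    (U C₀ C₂ : ℝ) (hU : 0 < U) (hC₀ : 0 < C₀) (hC₂ : 0 < C₂) :
    IntegrableOn (fun t => g (3 * t) * C₂ / (3 * t) ^ 2) (Set.Ioi (U / 3)) ∧
    (U = Real.sqrt (C₂ / C₀) →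
      (∫ t in (0:ℝ)..(U/3), g (3 * t) * C₀) +
        (∫ t in Set.Ioi (U/3), g (3 * t) * C₂ / (3 * t) ^ 2) ≤
      (2/3) * Real.sqrt (C₀ * C₂) *
        (K₁ + K₂ * (Real.log ((n : ℝ) + 9/2 + Real.sqrt (C₂ / C₀)) + 1/2))) :=
  stmt_16_general n K₁ K₂ hK₂ g hg U C₀ C₂ hU hC₀ hC₂
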